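/- For every assignment σ : Fin n → Bool, every clause index i ∈ Fin m and every variable index j ∈ Fin n, the run of the Tsitsiklis–Papadimitriou transition system started at the unprimed state A_{ij} and evolving according to σ reaches the state A_{n+1} after exactly 2(n + 1 − j) steps (indices counted from 1); in particular a run that enters the unprimed track can never reach A'_{n+1}. -/
import Mathlib


/-- States of the Tsitsiklis–Papadimitriou transition system for a QBF instance
with `m` clauses and `n` variables: `s0`; `A i j`, `A' i j`, `T i j`, `T' i j`,
`F i j`, `F' i j` for `i : Fin m`, `j : Fin n`; and the two final states
`Afin` (= A_{n+1}) and `A'fin` (= A'_{n+1}). -/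
inductive TPState (m n : ℕ) : Type where
  | s0 : TPState m n
  | A (i : Fin m) (j : Fin n) : TPState m n
  | A' (i : Fin m) (j : Fin n) : TPState m n
  | T (i : Fin m) (j : Fin n) : TPState m n
  | T' (i : Fin m) (j : Fin n) : TPState m n
  | F (i : Fin m) (j : Fin n) : TPState m n
  | F' (i : Fin m) (j : Fin n) : TPState m n
  | Afin : TPState m n
  | A'fin : TPState m n
  deriving DecidableEq

/-- `A_{i,j+1}`, where `A_{i,n+1}` denotes the state `A_{n+1}`. -/
def TPState.nextA {m n : ℕ} (i : Fin m) (j : Fin n) : TPState m n :=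
  if h : (j : ℕ) + 1 < n then .A i ⟨(j : ℕ) + 1, h⟩ else .Afin

/-- `A'_{i,j+1}`, where `A'_{i,n+1}` denotes the state `A'_{n+1}`. -/
def TPState.nextA' {m n : ℕ} (i : Fin m) (j : Fin n) : TPState m n :=
  if h : (j : ℕ) + 1 < n then .A' i ⟨(j : ℕ) + 1, h⟩ else .A'fin

/-- One deterministic step of the transition system of the QBF instance `C`,
where the decision at variable `j` is `σ j`. -/
def TPStep {m n : ℕ} (C : Fin m → Fin n → Option Bool) (σ : Fin n → Bool) :
    TPState m n → TPState m n
  | .s0 => .s0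
  | .A i j => if σ j then .T i j else .F i j
  | .A' i j => if σ j then .T' i j else .F' i j
  | .T i j => .nextA i j
  | .F i j => .nextA i j
  | .T' i j => if C i j = some true then .nextA i j else .nextA' i j
  | .F' i j => if C i j = some false then .nextA i j else .nextA' i j
  | .Afin => .Afin
  | .A'fin => .A'fin

/-- Assignment `σ` satisfies clause `i` of the instance `C`. -/
def SatisfiesClause {m n : ℕ} (C : Fin m → Fin n → Option Bool)
    (σ : Fin n → Bool) (i : Fin m) : Prop :=
  ∃ j : Fin n, C i j = some (σ j)

instance {m n : ℕ} (C : Fin m → Fin n → Option Bool) (σ : Fin n → Bool) (i : Fin m) :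
    Decidable (SatisfiesClause C σ i) := by unfold SatisfiesClause; infer_instance

/-- Unprimed states. -/
def TPUnprimed {m n : ℕ} : TPState m n → Prop
  | .A _ _ => True
  | .T _ _ => True
  | .F _ _ => True
  | .Afin => True
  | _ => False

lemma TPUnprimed_step {m n : ℕ} (C : Fin m → Fin n → Option Bool) (σ : Fin n → Bool)
    (s : TPState m n) (hs : TPUnprimed s) : TPUnprimed (TPStep C σ s) := by
  cases s with
  | s0 => exact hs.elim
  | A' i j => exact hs.elim
  | T' i j => exact hs.elim
  | F' i j => exact hs.elim
  | A'fin => exact hs.elim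
  | Afin => trivial
  | A i j => by_cases h : σ j <;> simp only [TPStep, h, if_true, if_false] <;> trivial
  | T i j => show TPUnprimed (TPState.nextA i j); unfold TPState.nextA; split <;> trivial
  | F i j => show TPUnprimed (TPState.nextA i j); unfold TPState.nextA; split <;> trivial

lemma two_steps {m n : ℕ} (C : Fin m → Fin n → Option Bool) (σ : Fin n → Bool)
    (i : Fin m) (j : Fin n) :
    (TPStep C σ)^[2] (.A i j) = TPState.nextA i j := by
  simp only [Function.iterate_succ, Function.iterate_zero, Function.comp_apply, id_eq]
  by_cases h : σ j <;> simp [TPStep, h]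

lemma run_A {m n : ℕ} (C : Fin m → Fin n → Option Bool) (σ : Fin n → Bool)
    (i : Fin m) (d : ℕ) : ∀ j : Fin n, (j : ℕ) + d = n →
    (TPStep C σ)^[2 * d] (.A i j) = TPState.Afin := by
  induction d with
  | zero => intro j hj; exact absurd j.2 (by omega)
  | succ d ih =>
    intro j hj
    have h2 : 2 * (d + 1) = 2 * d + 2 := by ring
    rw [h2, Function.iterate_add_apply, two_steps]
    unfold TPState.nextA
    split
    · exact ih _ (by simpa using by omega)
    · have hd : d = 0 := by omega
      simp [hd]

/-- For every assignment `σ`, clause index `i` and variable index `j`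
(0-indexed here, so that `A i j` is the state `A_{i,j+1}` in 1-based indexing), the run
started at the unprimed state `A_{ij}` and evolving according to `σ` reaches `A_{n+1}`
after exactly `2(n + 1 - j)` steps (1-based), i.e. `2 * (n - j)` steps with 0-based `j`;
in particular such a run never reaches `A'_{n+1}`. -/
theorem run_from_unprimed_reaches_good (m n : ℕ) (hm : 1 ≤ m) (hn : 1 ≤ n)
    (C : Fin m → Fin n → Option Bool) (σ : Fin n → Bool) (i : Fin m) (j : Fin n) :
    (TPStep C σ)^[2 * (n - (j : ℕ))] (.A i j) = TPState.Afin ∧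
    ∀ k : ℕ, (TPStep C σ)^[k] (.A i j) ≠ TPState.A'fin := by
  constructor
  · exact run_A C σ i (n - j) j (by have := j.2; omega)
  · intro k
    have : TPUnprimed ((TPStep C σ)^[k] (.A i j)) := by
      induction k with
      | zero => trivial
      | succ k ih => rw [Function.iterate_succ_apply']; exact TPUnprimed_step C σ _ ih
    intro h
    rw [h] at this
    exact this
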